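/- arXiv:2303.18045 — 3 statements merged into one kernel-verified Lean document; each statement's English description precedes it below -/
import Mathlib

section
/- Let t > 0 and let ω be an ℕ-valued geometric random variable with P(ω = j) = e^{-jt}·(1 − e^{-t}) for j ∈ ℕ. Then the third absolute central moment satisfies E[|ω − E[ω]|³] ≤ 3·e^{-t}/(1 − e^{-t})³. -/
open MeasureTheory ProbabilityTheory Real

noncomputable section

/-!
The law of `ω` is `geometricMeasure p` with `p = 1 - e^{-t}`. Splitting off the atom at `0`
gives `E f(ω) = p f(0) + (1 - p) E f(ω + 1)`; for `f = (· - c)^k` the right-hand side involves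
the `k`-th moment about `c` with coefficient `1 - p < 1` and otherwise only lower moments, so the
moments are computed recursively: the mean is `(1 - p)/p`, the variance `(1 - p)/p²` and the fourth
central moment `(1 - p)(p² - 9p + 9)/p⁴ ≤ 9(1 - p)/p⁴`. Integrating the AM-GM bound
`|x|³ ≤ (l x² + x⁴/l)/2` with the Cauchy-Schwarz-optimal weight `l = 3/p` gives `3(1 - p)/p³`.
-/

lemma abs_pow_three_le (x : ℝ) {l : ℝ} (hl : 0 < l) : |x| ^ 3 ≤ (l * x ^ 2 + x ^ 4 / l) / 2 := by
  have h2 : x ^ 2 = |x| ^ 2 := (sq_abs x).symm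
  have h4 : x ^ 4 = |x| ^ 4 := (pow_abs x 4).symm ▸ (abs_of_nonneg (by positivity)).symm
  have hsq : 0 ≤ (l * |x| - |x| ^ 2) ^ 2 / l := by positivity
  have expand : (l * |x| - |x| ^ 2) ^ 2 / l = l * |x| ^ 2 + |x| ^ 4 / l - 2 * |x| ^ 3 := by
    field_simp
    ring
  rw [h2, h4]
  linarith

namespace ProbabilityTheory

lemma moment_zero_right {Ω : Type*} [MeasurableSpace Ω] (X : Ω → ℝ) (μ : Measure Ω)
    [IsProbabilityMeasure μ] : moment X 0 μ = 1 := by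
  simp [moment]

lemma integral_abs_pow_three_le {Ω : Type*} [MeasurableSpace Ω] {μ : Measure Ω} {Y : Ω → ℝ}
    (h2 : Integrable (fun ω => Y ω ^ 2) μ) (h4 : Integrable (fun ω => Y ω ^ 4) μ)
    {l : ℝ} (hl : 0 < l) :
    ∫ ω, |Y ω| ^ 3 ∂μ ≤ (l * moment Y 2 μ + moment Y 4 μ / l) / 2 := by
  calc ∫ ω, |Y ω| ^ 3 ∂μ ≤ ∫ ω, (l * Y ω ^ 2 + Y ω ^ 4 / l) / 2 ∂μ :=
        integral_mono_of_nonneg (ae_of_all _ fun ω => by positivity)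
          (((h2.const_mul l).add (h4.div_const l)).div_const 2)
          (ae_of_all _ fun ω => abs_pow_three_le (Y ω) hl)
    _ = (l * moment Y 2 μ + moment Y 4 μ / l) / 2 := by
        rw [integral_div, integral_add (h2.const_mul l) (h4.div_const l), integral_const_mul,
          integral_div]
        rfl

variable {p : unitInterval}

lemma integrable_pow_geometricMeasure (hp : p ≠ 0) (k : ℕ) :
    Integrable (fun n : ℕ => (n : ℝ) ^ k) (geometricMeasure p) := by
  have hp0 : (0 : ℝ) < p := unitInterval.pos_iff_ne_zero.mpr hp
  have hq : ‖(1 - p : ℝ)‖ < 1 := by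
    rw [norm_of_nonneg (unitInterval.one_minus_nonneg p)]
    linarith
  rw [integrable_geometricMeasure_iff hp]
  refine ((summable_pow_mul_geometric_of_norm_lt_one k hq).mul_right (p : ℝ)).congr fun n => ?_
  rw [norm_of_nonneg (by positivity)]
  ring

lemma integrable_sub_pow_geometricMeasure (hp : p ≠ 0) (c : ℝ) (k : ℕ) :
    Integrable (fun n : ℕ => ((n : ℝ) - c) ^ k) (geometricMeasure p) := by
  simp_rw [sub_eq_add_neg, add_pow]
  exact integrable_finsetSum _ fun i _ =>
    ((integrable_pow_geometricMeasure hp i).mul_const _).mul_const _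

lemma integral_geometricMeasure_eq_add_integral_succ (hp : p ≠ 0) {f : ℕ → ℝ}
    (hf : Integrable f (geometricMeasure p)) :
    ∫ n, f n ∂geometricMeasure p = p * f 0 + (1 - p) * ∫ n, f (n + 1) ∂geometricMeasure p := by
  have hsum := (hasSum_integral_geometricMeasure hp hf).summable
  simp only [integral_geometricMeasure hp, smul_eq_mul] at hsum ⊢
  rw [hsum.tsum_eq_zero_add, ← tsum_mul_left]
  congr 1
  · ring
  · exact tsum_congr fun n => by ring

lemma moment_sub_geometricMeasure (hp : p ≠ 0) (c : ℝ) (k : ℕ) :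
    moment (fun n : ℕ => (n : ℝ) - c) k (geometricMeasure p) = p * (-c) ^ k + (1 - p) *
      ∑ i ∈ Finset.range (k + 1),
        (k.choose i : ℝ) * moment (fun n : ℕ => (n : ℝ) - c) i (geometricMeasure p) := by
  have hshift : ∀ n : ℕ, (((n + 1 : ℕ) : ℝ) - c) ^ k =
      ∑ i ∈ Finset.range (k + 1), (k.choose i : ℝ) * ((n : ℝ) - c) ^ i := by
    intro n
    rw [Nat.cast_succ, add_sub_right_comm, add_pow]
    exact Finset.sum_congr rfl fun i _ => by ring
  simp only [moment, Pi.pow_apply]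
  rw [integral_geometricMeasure_eq_add_integral_succ hp (integrable_sub_pow_geometricMeasure hp c k)]
  simp only [hshift, Nat.cast_zero, zero_sub]
  rw [integral_finsetSum _ fun i _ => (integrable_sub_pow_geometricMeasure hp c i).const_mul _]
  simp only [integral_const_mul]

lemma integral_natCast_geometricMeasure (hp : p ≠ 0) :
    ∫ n, (n : ℝ) ∂geometricMeasure p = (1 - p) / p := by
  have hp0 : (p : ℝ) ≠ 0 := unitInterval.coe_ne_zero.mpr hp
  have h := moment_sub_geometricMeasure hp 0 1
  simp [Finset.sum_range_succ, moment_zero_right, moment_one] at h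
  field_simp
  linarith

lemma moment_sub_mean_geometricMeasure_one (hp : p ≠ 0) :
    moment (fun n : ℕ => (n : ℝ) - (1 - p) / p) 1 (geometricMeasure p) = 0 := by
  have hp0 : (p : ℝ) ≠ 0 := unitInterval.coe_ne_zero.mpr hp
  have h := moment_sub_geometricMeasure hp ((1 - p) / p) 1
  simp [Finset.sum_range_succ, moment_zero_right, mul_div_cancel₀ _ hp0] at h
  refine (mul_eq_zero.mp ?_).resolve_left hp0
  linear_combination h

lemma moment_sub_mean_geometricMeasure_two (hp : p ≠ 0) :
    moment (fun n : ℕ => (n : ℝ) - (1 - p) / p) 2 (geometricMeasure p) = (1 - p : ℝ) / p ^ 2 := by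
  have hp0 : (p : ℝ) ≠ 0 := unitInterval.coe_ne_zero.mpr hp
  have h := moment_sub_geometricMeasure hp ((1 - p) / p) 2
  simp only [Finset.sum_range_succ, Finset.sum_range_zero, moment_zero_right,
    moment_sub_mean_geometricMeasure_one hp] at h
  -- naming the centred variable keeps `field_simp` out of the integrands
  set Y := fun n : ℕ => (n : ℝ) - (1 - p) / p
  norm_num [Nat.choose] at h
  field_simp at h ⊢
  linear_combination h

lemma moment_sub_mean_geometricMeasure_three (hp : p ≠ 0) :
    moment (fun n : ℕ => (n : ℝ) - (1 - p) / p) 3 (geometricMeasure p) =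
      (1 - p : ℝ) * (2 - p) / p ^ 3 := by
  have hp0 : (p : ℝ) ≠ 0 := unitInterval.coe_ne_zero.mpr hp
  have h := moment_sub_geometricMeasure hp ((1 - p) / p) 3
  simp only [Finset.sum_range_succ, Finset.sum_range_zero, moment_zero_right,
    moment_sub_mean_geometricMeasure_one hp, moment_sub_mean_geometricMeasure_two hp] at h
  set Y := fun n : ℕ => (n : ℝ) - (1 - p) / p
  norm_num [Nat.choose] at h
  field_simp at h ⊢
  linear_combination h

lemma moment_sub_mean_geometricMeasure_four (hp : p ≠ 0) :
    moment (fun n : ℕ => (n : ℝ) - (1 - p) / p) 4 (geometricMeasure p) =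
      (1 - p : ℝ) * (p ^ 2 - 9 * p + 9) / p ^ 4 := by
  have hp0 : (p : ℝ) ≠ 0 := unitInterval.coe_ne_zero.mpr hp
  have h := moment_sub_geometricMeasure hp ((1 - p) / p) 4
  simp only [Finset.sum_range_succ, Finset.sum_range_zero, moment_zero_right,
    moment_sub_mean_geometricMeasure_one hp, moment_sub_mean_geometricMeasure_two hp,
    moment_sub_mean_geometricMeasure_three hp] at h
  set Y := fun n : ℕ => (n : ℝ) - (1 - p) / p
  norm_num [Nat.choose] at h
  field_simp at h ⊢
  linear_combination h

lemma integral_abs_sub_integral_pow_three_geometricMeasure_le (hp : p ≠ 0) :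
    ∫ n, |(n : ℝ) - ∫ k, (k : ℝ) ∂geometricMeasure p| ^ 3 ∂geometricMeasure p ≤
      3 * (1 - p : ℝ) / p ^ 3 := by
  have hp0 : (0 : ℝ) < p := unitInterval.pos_iff_ne_zero.mpr hp
  have hp1 : (p : ℝ) ≤ 1 := unitInterval.le_one p
  rw [integral_natCast_geometricMeasure hp]
  refine (integral_abs_pow_three_le (integrable_sub_pow_geometricMeasure hp _ 2)
    (integrable_sub_pow_geometricMeasure hp _ 4) (div_pos three_pos hp0)).trans ?_
  rw [moment_sub_mean_geometricMeasure_two hp, moment_sub_mean_geometricMeasure_four hp]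
  calc _ = 3 * (1 - p : ℝ) / p ^ 3 - (1 - p) * p * (9 - p) / (6 * p ^ 3) := by
        field_simp
        ring
    _ ≤ 3 * (1 - p : ℝ) / p ^ 3 :=
        sub_le_self _ (div_nonneg (mul_nonneg (mul_nonneg (by linarith) hp0.le) (by linarith))
          (by positivity))

end ProbabilityTheory

theorem geometric_third_absolute_central_moment_general
    {Ω : Type} [MeasurableSpace Ω] (P : Measure Ω)
    (ω : Ω → ℕ) (hmeas : Measurable ω) (t : ℝ) (ht : 0 < t)
    (hlaw : ∀ j : ℕ, P {a | ω a = j} =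
      ENNReal.ofReal (Real.exp (-(j : ℝ) * t) * (1 - Real.exp (-t)))) :
    ∫ a, |(ω a : ℝ) - ∫ b, (ω b : ℝ) ∂P| ^ 3 ∂P ≤
      3 * Real.exp (-t) / (1 - Real.exp (-t)) ^ 3 := by
  have hq0 : 0 < exp (-t) := exp_pos _
  have hq1 : exp (-t) < 1 := exp_lt_one_iff.mpr (neg_lt_zero.mpr ht)
  let p : unitInterval := ⟨1 - exp (-t), by linarith, by linarith⟩
  have hp : p ≠ 0 := unitInterval.pos_iff_ne_zero.mp (show (0 : ℝ) < 1 - exp (-t) by linarith)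
  have hlaw_eq : P.map ω = geometricMeasure p := Measure.ext_of_singleton fun n => by
    rw [Measure.map_apply hmeas (measurableSet_singleton n), geometricMeasure_singleton hp]
    convert hlaw n using 3
    · rfl
    · rw [sub_sub_cancel, ← exp_nat_mul]
      ring_nf
  have key := integral_abs_sub_integral_pow_three_geometricMeasure_le hp
  rw [← hlaw_eq, integral_map hmeas.aemeasurable (.of_discrete),
    integral_map hmeas.aemeasurable (.of_discrete)] at key
  simpa [p] using key

/-- For an `ℕ`-valued geometric random variable `ω` with
`P(ω = j) = e^{-jt} (1 - e^{-t})`, `t > 0`, the third absolute central moment satisfies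
`E[|ω - E[ω]|³] ≤ 3 e^{-t} / (1 - e^{-t})³`. -/
theorem geometric_third_absolute_central_moment
    {Ω : Type} [MeasurableSpace Ω] (P : Measure Ω) [IsProbabilityMeasure P]
    (ω : Ω → ℕ) (hmeas : Measurable ω) (t : ℝ) (ht : 0 < t)
    (hlaw : ∀ j : ℕ, P {a | ω a = j} =
      ENNReal.ofReal (Real.exp (-(j : ℝ) * t) * (1 - Real.exp (-t)))) :
    ∫ a, |(ω a : ℝ) - ∫ b, (ω b : ℝ) ∂P| ^ 3 ∂P ≤
      3 * Real.exp (-t) / (1 - Real.exp (-t)) ^ 3 :=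
  geometric_third_absolute_central_moment_general P ω hmeas t ht hlaw

end
end

section
/- As n → ∞, the weighted sum over primitive lattice points of the subcone satisfies Σ_{x ∈ P_d ∩ C_1} ‖x‖³ · 3·e^{-β_n a·x}/(1 − e^{-β_n a·x})³ = O(n^{(d+3)/(d+1)}). -/
open MeasureTheory ProbabilityTheory Real Filter Asymptotics Topology Matrix

noncomputable section

/-- Real values of the Riemann zeta function at integer arguments. -/
def zetaR (s : ℕ) : ℝ := ∑' k : ℕ+, (1 : ℝ) / (k : ℝ) ^ s

/-- A vector of `ℤ^d` is primitive if it is nonzero and the gcd of its coordinates is 1. -/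
def IsPrimitiveVec {d : ℕ} (v : Fin d → ℤ) : Prop :=
  v ≠ 0 ∧ Finset.univ.gcd v = 1

/-- The set of primitive vectors of `ℤ^d`, viewed inside `ℝ^d`. -/
def primSet (d : ℕ) : Set (EuclideanSpace ℝ (Fin d)) :=
  {y | ∃ v : Fin d → ℤ, IsPrimitiveVec v ∧ ∀ i, y i = (v i : ℝ)}

/-- Dot product on `ℝ^d`. -/
def dotR {d : ℕ} (a x : EuclideanSpace ℝ (Fin d)) : ℝ := ∑ i, a i * x i

/-- `β_n = (ζ(d+1) / (ζ(d) n))^{1/(d+1)}`. -/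
def betaSeq (d : ℕ) (n : ℕ) : ℝ :=
  (zetaR (d + 1) / (zetaR d * n)) ^ ((1 : ℝ) / (d + 1))

/-- A `d`-dimensional closed convex pointed (salient) cone containing `0`. -/
structure IsGoodCone {d : ℕ} (C : Set (EuclideanSpace ℝ (Fin d))) : Prop where
  closed : IsClosed C
  convex : Convex ℝ C
  smul_mem : ∀ (c : ℝ), 0 ≤ c → ∀ x ∈ C, c • x ∈ C
  salient : C ∩ (-C) ⊆ {0}
  fullDim : (interior C).Nonempty
  zero_mem : (0 : EuclideanSpace ℝ (Fin d)) ∈ C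

/-- `μ^n(C_1) = Σ_{x ∈ P_d ∩ C_1} x e^{-β_n a·x} / (1 - e^{-β_n a·x})`. -/
def muN {d : ℕ} (a : EuclideanSpace ℝ (Fin d)) (S : Set (EuclideanSpace ℝ (Fin d))) (n : ℕ) :
    EuclideanSpace ℝ (Fin d) :=
  ∑' x : ↥(primSet d ∩ S),
    (Real.exp (-(betaSeq d n * dotR a x)) / (1 - Real.exp (-(betaSeq d n * dotR a x)))) •
      (x : EuclideanSpace ℝ (Fin d))

/-- `μ(C_1) = (d+1)! ∫_{C(a ≤ 1) ∩ C_1} x dx`. -/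
def muLim {d : ℕ} (a : EuclideanSpace ℝ (Fin d)) (C S : Set (EuclideanSpace ℝ (Fin d))) :
    EuclideanSpace ℝ (Fin d) :=
  (Nat.factorial (d + 1) : ℝ) • ∫ x in ({x ∈ C | dotR a x ≤ 1} ∩ S), x

/-- `Γ^n(C_1) = Σ_{x ∈ P_d ∩ C_1} x xᵀ e^{-β_n a·x} / (1 - e^{-β_n a·x})²`. -/
def GammaN {d : ℕ} (a : EuclideanSpace ℝ (Fin d)) (S : Set (EuclideanSpace ℝ (Fin d))) (n : ℕ) :
    Matrix (Fin d) (Fin d) ℝ :=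
  Matrix.of fun i j => ∑' x : ↥(primSet d ∩ S),
    (x : EuclideanSpace ℝ (Fin d)) i * (x : EuclideanSpace ℝ (Fin d)) j *
      (Real.exp (-(betaSeq d n * dotR a x)) / (1 - Real.exp (-(betaSeq d n * dotR a x))) ^ 2)

/-- `Γ(C_1) = (ζ(d)/ζ(d+1))^{1/(d+1)} (d+1)! ∫_{C(a ≤ 1) ∩ C_1} x xᵀ dx`. -/
def GammaLim {d : ℕ} (a : EuclideanSpace ℝ (Fin d)) (C S : Set (EuclideanSpace ℝ (Fin d))) :
    Matrix (Fin d) (Fin d) ℝ :=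
  Matrix.of fun i j =>
    (zetaR d / zetaR (d + 1)) ^ ((1 : ℝ) / (d + 1)) * (Nat.factorial (d + 1) : ℝ) *
      ∫ x in ({x ∈ C | dotR a x ≤ 1} ∩ S), x i * x j

/-- Reinterpret a plain vector of `Fin d → ℝ` as a point of Euclidean space. -/
def toE {d : ℕ} (v : Fin d → ℝ) : EuclideanSpace ℝ (Fin d) :=
  (EuclideanSpace.equiv (Fin d) ℝ).symm v

/-- Apply a matrix to a vector of Euclidean space. -/
def mulVecE {d : ℕ} (M : Matrix (Fin d) (Fin d) ℝ) (v : EuclideanSpace ℝ (Fin d)) :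
    EuclideanSpace ℝ (Fin d) :=
  toE (M.mulVec fun i => v i)

/-- The standard Gaussian measure on `ℝ^d`. -/
def stdGaussian (d : ℕ) : Measure (EuclideanSpace ℝ (Fin d)) :=
  volume.withDensity fun x =>
    ENNReal.ofReal ((2 * π) ^ (-(d : ℝ) / 2) * Real.exp (-‖x‖ ^ 2 / 2))

/-- `X^n(C_1) = Σ_{x ∈ P_d ∩ C_1} ω(x) x`, where the multiplicities are indexed by the
primitive vectors of the ambient cone `C`. -/
def Xpart {d : ℕ} {Ω : Type} (C C1 : Set (EuclideanSpace ℝ (Fin d)))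
    (ωm : ↥(primSet d ∩ C) → Ω → ℕ) (ω' : Ω) : EuclideanSpace ℝ (Fin d) :=
  ∑' x : ↥(primSet d ∩ C),
    Set.indicator C1 (fun _ => (ωm x ω' : ℝ) • (x : EuclideanSpace ℝ (Fin d)))
      (x : EuclideanSpace ℝ (Fin d))

/-!
Since `a` is positive on the closed cone `C`, compactness of its trace on the unit sphere
gives `c > 0` with `c‖x‖ ≤ a·x` on `C`. The elementary bound `e^{-t}/(1-e^{-t})³ ≤ 216 e^{-t/2}/t³` then dominates
each summand by `648 (βc)⁻³ e^{-βc‖x‖/2}`, and summing this over all of `ℤ^d` (via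
`‖x‖ ≥ (1/d) Σ |xᵢ|`, which factors the sum into one-dimensional geometric series) gives
`O(β⁻³ · β⁻ᵈ)`. Finally `β_n⁻¹ ≍ n^{1/(d+1)}`.
-/

lemma zetaR_pos {s : ℕ} (hs : 2 ≤ s) : 0 < zetaR s := by
  have hsum : Summable (fun k : ℕ+ => (1 : ℝ) / (k : ℝ) ^ s) :=
    (Real.summable_one_div_nat_pow.2 hs).comp_injective PNat.coe_injective
  exact hsum.tsum_pos (fun k => by positivity) 1 (by norm_num)

lemma zetaR_nonneg (s : ℕ) : 0 ≤ zetaR s :=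
  tsum_nonneg fun k => by positivity

lemma betaSeq_pos {d n : ℕ} (hd : 2 ≤ d) (hn : 0 < n) : 0 < betaSeq d n :=
  Real.rpow_pos_of_pos (div_pos (zetaR_pos (by omega)) (mul_pos (zetaR_pos hd) (by positivity))) _

lemma tendsto_betaSeq_atTop {d : ℕ} (hd : 2 ≤ d) : Tendsto (betaSeq d) atTop (𝓝 0) := by
  have hbase : Tendsto (fun n : ℕ => zetaR (d + 1) / (zetaR d * n)) atTop (𝓝 0) :=
    tendsto_const_nhds.div_atTop (tendsto_natCast_atTop_atTop.const_mul_atTop (zetaR_pos hd))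
  have hp : (0 : ℝ) < 1 / (d + 1) := by positivity
  have h := (Real.continuousAt_rpow_const 0 _ (Or.inr hp.le)).tendsto.comp hbase
  rwa [Real.zero_rpow hp.ne'] at h

lemma inv_betaSeq_pow (d n k : ℕ) :
    (betaSeq d n)⁻¹ ^ k =
      (zetaR d / zetaR (d + 1)) ^ ((k : ℝ) / (d + 1)) * (n : ℝ) ^ ((k : ℝ) / (d + 1)) := by
  have hz := zetaR_nonneg d
  have hz' := zetaR_nonneg (d + 1)
  rw [betaSeq, ← Real.inv_rpow (by positivity), inv_div, ← Real.rpow_natCast,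
    ← Real.rpow_mul (by positivity), mul_div_right_comm, ← Real.mul_rpow (by positivity)
      (Nat.cast_nonneg n)]
  congr 1
  ring

lemma isBigO_inv_betaSeq_pow (d k : ℕ) :
    (fun n => (betaSeq d n)⁻¹ ^ k) =O[atTop] (fun n : ℕ => (n : ℝ) ^ ((k : ℝ) / (d + 1))) := by
  simp_rw [inv_betaSeq_pow]
  exact (isBigO_refl _ _).const_mul_left _

lemma div_one_add_le_one_sub_exp_neg {t : ℝ} (ht : 0 ≤ t) : t / (1 + t) ≤ 1 - exp (-t) := by
  have h : exp (-t) ≤ 1 / (1 + t) := by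
    rw [exp_neg, one_div]
    exact inv_anti₀ (by positivity) (by linarith [add_one_le_exp t])
  have h1 : 1 - 1 / (1 + t) = t / (1 + t) := by field_simp; ring
  linarith

lemma exp_neg_div_one_sub_exp_neg_pow_three_le {s t : ℝ} (hs : 0 < s) (hst : s ≤ t) :
    exp (-t) / (1 - exp (-t)) ^ 3 ≤ 216 * exp (-(s / 2)) / s ^ 3 := by
  have ht : 0 < t := hs.trans_le hst
  have hlin : 1 + t ≤ 6 * exp (t / 6) := by linarith [add_one_le_exp (t / 6)]
  have hexp : exp (-t) * exp (t / 6) ^ 3 = exp (-(t / 2)) := by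
    rw [← exp_nat_mul, ← exp_add]
    ring_nf
  calc exp (-t) / (1 - exp (-t)) ^ 3
      ≤ exp (-t) / (t / (1 + t)) ^ 3 := by
        gcongr
        exact div_one_add_le_one_sub_exp_neg ht.le
    _ = exp (-t) * (1 + t) ^ 3 / t ^ 3 := by field_simp
    _ ≤ exp (-t) * (6 * exp (t / 6)) ^ 3 / t ^ 3 := by gcongr
    _ = 216 * exp (-(t / 2)) / t ^ 3 := by rw [← hexp]; ring
    _ ≤ 216 * exp (-(s / 2)) / s ^ 3 := by gcongr

lemma pow_three_mul_exp_neg_div_le {β c y t : ℝ} (hβ : 0 < β) (hc : 0 < c) (hy : 0 < y)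
    (hyt : c * y ≤ t) :
    y ^ 3 * (3 * exp (-(β * t)) / (1 - exp (-(β * t))) ^ 3) ≤
      648 / (β * c) ^ 3 * exp (-(β * c / 2) * y) := by
  have h := exp_neg_div_one_sub_exp_neg_pow_three_le (s := β * c * y) (t := β * t)
    (by positivity) (by rw [mul_assoc]; exact mul_le_mul_of_nonneg_left hyt hβ.le)
  calc y ^ 3 * (3 * exp (-(β * t)) / (1 - exp (-(β * t))) ^ 3)
      = 3 * y ^ 3 * (exp (-(β * t)) / (1 - exp (-(β * t))) ^ 3) := by ring
    _ ≤ 3 * y ^ 3 * (216 * exp (-(β * c * y / 2)) / (β * c * y) ^ 3) :=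
        mul_le_mul_of_nonneg_left h (by positivity)
    _ = 648 / (β * c) ^ 3 * exp (-(β * c / 2) * y) := by
      field_simp
      ring_nf

lemma dotR_eq_inner {d : ℕ} (a x : EuclideanSpace ℝ (Fin d)) : dotR a x = inner ℝ a x := by
  simp [dotR, PiLp.inner_apply, mul_comm]

lemma exists_pos_mul_norm_le_dotR {d : ℕ} {C : Set (EuclideanSpace ℝ (Fin d))}
    (hCc : IsClosed C) (hCs : ∀ c : ℝ, 0 ≤ c → ∀ x ∈ C, c • x ∈ C)
    {a : EuclideanSpace ℝ (Fin d)} (ha : ∀ x ∈ C, x ≠ 0 → 0 < dotR a x) :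
    ∃ c : ℝ, 0 < c ∧ ∀ x ∈ C, c * ‖x‖ ≤ dotR a x := by
  simp_rw [dotR_eq_inner] at ha ⊢
  have hK : IsCompact (C ∩ Metric.sphere 0 1) := (isCompact_sphere 0 1).inter_left hCc
  obtain ⟨c, hc, hcK⟩ := hK.exists_forall_le' (continuous_const.inner continuous_id).continuousOn
    fun y hy => ha y hy.1 (ne_zero_of_mem_sphere one_ne_zero ⟨y, hy.2⟩)
  refine ⟨c, hc, fun x hx => ?_⟩
  rcases eq_or_ne x 0 with rfl | hx0
  · simp
  have hxn : 0 < ‖x‖ := norm_pos_iff.2 hx0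
  have h := hcK (‖x‖⁻¹ • x) ⟨hCs _ (inv_nonneg.2 hxn.le) x hx, by simp [norm_smul, hxn.ne']⟩
  rw [id, inner_smul_right, le_inv_mul_iff₀ hxn, mul_comm] at h
  exact h

lemma summable_pi_prod_and_tsum_le {ι κ : Type*} [Fintype κ] {g : ι → ℝ} (hg0 : 0 ≤ g)
    (hg : Summable g) :
    Summable (fun v : κ → ι => ∏ i, g (v i)) ∧
      ∑' v : κ → ι, ∏ i, g (v i) ≤ (∑' k, g k) ^ Fintype.card κ := by
  classical
  have hprod0 : 0 ≤ fun v : κ → ι => ∏ i, g (v i) := fun v => Finset.prod_nonneg fun i _ => hg0 _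
  have hfin : ∀ F : Finset (κ → ι), ∑ v ∈ F, ∏ i, g (v i) ≤ (∑' k, g k) ^ Fintype.card κ := by
    intro F
    set T : Finset ι := Finset.univ.biUnion fun i => F.image (· i)
    have hFT : F ⊆ Fintype.piFinset fun _ => T := fun v hv =>
      Fintype.mem_piFinset.2 fun i => Finset.mem_biUnion.2 ⟨i, Finset.mem_univ _,
        Finset.mem_image_of_mem _ hv⟩
    calc ∑ v ∈ F, ∏ i, g (v i)
        ≤ ∑ v ∈ Fintype.piFinset fun _ => T, ∏ i, g (v i) :=
          Finset.sum_le_sum_of_subset_of_nonneg hFT fun v _ _ => hprod0 v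
      _ = (∑ k ∈ T, g k) ^ Fintype.card κ := by
          rw [← Finset.prod_univ_sum, Finset.prod_const, Finset.card_univ]
      _ ≤ (∑' k, g k) ^ Fintype.card κ := by
          gcongr
          · exact Finset.sum_nonneg fun k _ => hg0 k
          · exact hg.sum_le_tsum T fun k _ => hg0 k
  exact ⟨summable_of_sum_le hprod0 hfin, tsum_le_of_sum_le' (pow_nonneg (tsum_nonneg hg0) _) hfin⟩

lemma hasSum_pow_natAbs {r : ℝ} (h0 : 0 ≤ r) (h1 : r < 1) :
    HasSum (fun k : ℤ => r ^ k.natAbs) ((1 + r) / (1 - r)) := by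
  have hgeom := hasSum_geometric_of_lt_one h0 h1
  have hneg : HasSum (fun n : ℕ => r ^ (-((n : ℤ) + 1)).natAbs) (r * (1 - r)⁻¹) := by
    have hterm : (fun n : ℕ => r ^ (-((n : ℤ) + 1)).natAbs) = fun n => r * r ^ n := by
      ext n
      rw [show (-((n : ℤ) + 1)).natAbs = n + 1 by omega, pow_succ']
    exact hterm ▸ hgeom.mul_left r
  convert HasSum.of_nat_of_neg_add_one (f := fun k : ℤ => r ^ k.natAbs) hgeom hneg using 1
  field_simp

lemma tsum_exp_neg_pow_natAbs_le {u : ℝ} (hu0 : 0 < u) (hu1 : u ≤ 1) :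
    ∑' k : ℤ, exp (-u) ^ k.natAbs ≤ 4 / u := by
  have hr1 : exp (-u) < 1 := exp_lt_one_iff.2 (by linarith)
  have hgap : u / 2 ≤ 1 - exp (-u) :=
    le_trans (div_le_div_of_nonneg_left hu0.le (by linarith) (by linarith))
      (div_one_add_le_one_sub_exp_neg hu0.le)
  rw [(hasSum_pow_natAbs (exp_pos _).le hr1).tsum_eq, div_le_div_iff₀ (by linarith) hu0]
  nlinarith

lemma toE_apply {d : ℕ} (v : Fin d → ℝ) (i : Fin d) : toE v i = v i := rfl

lemma summable_exp_neg_norm_intVec_and_tsum_le {d : ℕ} {u : ℝ} (hu0 : 0 < u) (hu1 : u ≤ 1) :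
    Summable (fun v : Fin d → ℤ => exp (-(d * u) * ‖toE fun i => (v i : ℝ)‖)) ∧
      ∑' v : Fin d → ℤ, exp (-(d * u) * ‖toE fun i => (v i : ℝ)‖) ≤ (4 / u) ^ d := by
  have hle : ∀ v : Fin d → ℤ,
      exp (-(d * u) * ‖toE fun i => (v i : ℝ)‖) ≤ ∏ i, exp (-u) ^ (v i).natAbs := by
    intro v
    have hnorm : ∑ i, ((v i).natAbs : ℝ) ≤ d * ‖toE fun i => (v i : ℝ)‖ := by
      calc ∑ i, ((v i).natAbs : ℝ) ≤ ∑ _i : Fin d, ‖toE fun i => (v i : ℝ)‖ :=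
            Finset.sum_le_sum fun i _ => by
              simpa [toE_apply, Int.cast_abs] using PiLp.norm_apply_le (toE fun i => (v i : ℝ)) i
        _ = d * ‖toE fun i => (v i : ℝ)‖ := by simp
    simp_rw [← exp_nat_mul, ← exp_sum]
    rw [exp_le_exp, ← Finset.sum_mul]
    nlinarith
  obtain ⟨hS, hT⟩ := summable_pi_prod_and_tsum_le (κ := Fin d)
    (g := fun k : ℤ => exp (-u) ^ k.natAbs) (fun k => pow_nonneg (exp_pos _).le _)
    (hasSum_pow_natAbs (exp_pos (-u)).le (exp_lt_one_iff.2 (by linarith))).summable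
  have hS' := hS.of_nonneg_of_le (fun v => (exp_pos _).le) hle
  refine ⟨hS', (hS'.tsum_le_tsum hle hS).trans (hT.trans ?_)⟩
  rw [Fintype.card_fin]
  exact pow_le_pow_left₀ (tsum_nonneg fun k => by positivity) (tsum_exp_neg_pow_natAbs_le hu0 hu1) d

lemma summable_and_tsum_primSet_inter_le {d : ℕ} (S : Set (EuclideanSpace ℝ (Fin d)))
    {g : EuclideanSpace ℝ (Fin d) → ℝ} (hg0 : ∀ x, 0 ≤ g x)
    (hg : Summable fun v : Fin d → ℤ => g (toE fun i => (v i : ℝ))) :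
    Summable (fun x : ↥(primSet d ∩ S) => g x) ∧
      ∑' x : ↥(primSet d ∩ S), g x ≤ ∑' v : Fin d → ℤ, g (toE fun i => (v i : ℝ)) := by
  set e : ↥(primSet d ∩ S) → Fin d → ℤ := fun x i => ⌊(x : EuclideanSpace ℝ (Fin d)) i⌋
  have he : ∀ x, toE (fun i => (e x i : ℝ)) = x := by
    rintro ⟨x, ⟨v, -, hv⟩, -⟩
    ext i
    simp [e, toE_apply, hv]
  have he_inj : Function.Injective e := fun x y hxy =>
    Subtype.ext (by rw [← he x, ← he y, hxy])
  have hsum : Summable (fun x : ↥(primSet d ∩ S) => g x) :=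
    (hg.comp_injective he_inj).congr fun x => by simp only [Function.comp_apply, he]
  exact ⟨hsum, hsum.tsum_le_tsum_of_inj e he_inj (fun v _ => hg0 _)
    (fun x => (congrArg g (he x)).ge) hg⟩

lemma norm_tsum_third_moment_le {d : ℕ} {S : Set (EuclideanSpace ℝ (Fin d))}
    {a : EuclideanSpace ℝ (Fin d)} {β c : ℝ} (hβ : 0 < β) (hc : 0 < c) (hβc : β * c ≤ 2 * d)
    (hS : ∀ x ∈ S, c * ‖x‖ ≤ dotR a x) :
    ‖∑' x : ↥(primSet d ∩ S), ‖(x : EuclideanSpace ℝ (Fin d))‖ ^ 3 *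
        (3 * exp (-(β * dotR a x)) / (1 - exp (-(β * dotR a x))) ^ 3)‖ ≤
      648 * (8 * d) ^ d / c ^ (d + 3) * ‖β⁻¹ ^ (d + 3)‖ := by
  have hd : (0 : ℝ) < d := by nlinarith [mul_pos hβ hc]
  set u := β * c / (2 * d)
  have hdu : d * u = β * c / 2 := by
    simp only [u]
    field_simp
  obtain ⟨hlat, hlatT⟩ := summable_exp_neg_norm_intVec_and_tsum_le (d := d) (u := u)
    (by positivity) (by rw [div_le_one (by positivity)]; exact hβc)
  rw [hdu] at hlat hlatT
  set g : EuclideanSpace ℝ (Fin d) → ℝ := fun x => 648 / (β * c) ^ 3 * exp (-(β * c / 2) * ‖x‖)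
  obtain ⟨hgS, hgT⟩ := summable_and_tsum_primSet_inter_le S (g := g)
    (fun x => by positivity) (hlat.mul_left _)
  have hterm : ∀ x : ↥(primSet d ∩ S), 0 ≤ ‖(x : EuclideanSpace ℝ (Fin d))‖ ^ 3 *
        (3 * exp (-(β * dotR a x)) / (1 - exp (-(β * dotR a x))) ^ 3) ∧
      ‖(x : EuclideanSpace ℝ (Fin d))‖ ^ 3 *
        (3 * exp (-(β * dotR a x)) / (1 - exp (-(β * dotR a x))) ^ 3) ≤ g x := by
    rintro ⟨x, ⟨v, hv, hxv⟩, hxS⟩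
    have hx0 : x ≠ 0 := fun h => hv.1 (funext fun i => by simpa [h] using (hxv i).symm)
    have hax := hS x hxS
    have hE : exp (-(β * dotR a x)) ≤ 1 :=
      exp_le_one_iff.2 (neg_nonpos.2 (mul_nonneg hβ.le ((by positivity : 0 ≤ c * ‖x‖).trans hax)))
    exact ⟨mul_nonneg (by positivity) (div_nonneg (by positivity) (pow_nonneg (by linarith) 3)),
      pow_three_mul_exp_neg_div_le hβ hc (norm_pos_iff.2 hx0) hax⟩
  rw [norm_of_nonneg (tsum_nonneg fun x => (hterm x).1), norm_of_nonneg (by positivity)]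
  calc _ ≤ ∑' x : ↥(primSet d ∩ S), g x :=
        (hgS.of_nonneg_of_le (fun x => (hterm x).1) fun x => (hterm x).2).tsum_le_tsum
          (fun x => (hterm x).2) hgS
    _ ≤ 648 / (β * c) ^ 3 * ∑' v : Fin d → ℤ, exp (-(β * c / 2) * ‖toE fun i => (v i : ℝ)‖) := by
        rw [← tsum_mul_left]; exact hgT
    _ ≤ 648 / (β * c) ^ 3 * (4 / u) ^ d := by gcongr
    _ = 648 * (8 * d) ^ d / c ^ (d + 3) * β⁻¹ ^ (d + 3) := by
        simp only [u, div_div_eq_mul_div]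
        ring

lemma isBigO_tsum_third_moment {d : ℕ} (hd : 2 ≤ d) {S : Set (EuclideanSpace ℝ (Fin d))}
    {a : EuclideanSpace ℝ (Fin d)} {c : ℝ} (hc : 0 < c) (hS : ∀ x ∈ S, c * ‖x‖ ≤ dotR a x) :
    (fun n : ℕ => ∑' x : ↥(primSet d ∩ S), ‖(x : EuclideanSpace ℝ (Fin d))‖ ^ 3 *
        (3 * exp (-(betaSeq d n * dotR a x)) / (1 - exp (-(betaSeq d n * dotR a x))) ^ 3))
      =O[atTop] fun n => (betaSeq d n)⁻¹ ^ (d + 3) := by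
  have hsmall : ∀ᶠ n in atTop, betaSeq d n * c < 2 * d := by
    refine ((tendsto_betaSeq_atTop hd).mul_const c).eventually (gt_mem_nhds ?_)
    rw [zero_mul]
    positivity
  refine IsBigO.of_bound (648 * (8 * d) ^ d / c ^ (d + 3)) ?_
  filter_upwards [eventually_gt_atTop 0, hsmall] with n hn hβc
  exact norm_tsum_third_moment_le (betaSeq_pos hd hn) hc hβc.le hS

theorem third_moment_sum_bound_general {d : ℕ} (hd : 2 ≤ d)
    (C C1 : Set (EuclideanSpace ℝ (Fin d)))
    (hC : IsGoodCone C) (hC1sub : C1 ⊆ C)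
    (a : EuclideanSpace ℝ (Fin d)) (ha : ∀ x ∈ C, x ≠ 0 → 0 < dotR a x) :
    (fun n : ℕ => ∑' x : ↥(primSet d ∩ C1),
        ‖(x : EuclideanSpace ℝ (Fin d))‖ ^ 3 *
          (3 * Real.exp (-(betaSeq d n * dotR a x)) /
            (1 - Real.exp (-(betaSeq d n * dotR a x))) ^ 3))
      =O[atTop] (fun n : ℕ => (n : ℝ) ^ (((d : ℝ) + 3) / ((d : ℝ) + 1))) := by
  obtain ⟨c, hc, hcC⟩ := exists_pos_mul_norm_le_dotR hC.closed hC.smul_mem ha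
  have hβ := isBigO_inv_betaSeq_pow d (d + 3)
  push_cast at hβ
  exact (isBigO_tsum_third_moment hd hc fun x hx => hcC x (hC1sub hx)).trans hβ

/-- As `n → ∞`,
`Σ_{x ∈ P_d ∩ C_1} ‖x‖³ · 3 e^{-β_n a·x} / (1 - e^{-β_n a·x})³ = O(n^{(d+3)/(d+1)})`. -/
theorem third_moment_sum_bound {d : ℕ} (hd : 2 ≤ d)
    (C C1 : Set (EuclideanSpace ℝ (Fin d)))
    (hC : IsGoodCone C) (hC1 : IsGoodCone C1) (hC1sub : C1 ⊆ C)
    (a : EuclideanSpace ℝ (Fin d)) (ha : ∀ x ∈ C, x ≠ 0 → 0 < dotR a x) :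
    (fun n : ℕ => ∑' x : ↥(primSet d ∩ C1),
        ‖(x : EuclideanSpace ℝ (Fin d))‖ ^ 3 *
          (3 * Real.exp (-(betaSeq d n * dotR a x)) /
            (1 - Real.exp (-(betaSeq d n * dotR a x))) ^ 3))
      =O[atTop] (fun n : ℕ => (n : ℝ) ^ (((d : ℝ) + 3) / ((d : ℝ) + 1))) :=
  third_moment_sum_bound_general hd C C1 hC hC1sub a ha

end
end

section
/- For every complex number z with |z| < 1, the inequality |(1 − |z|)/(1 − z)| ≤ exp(Re(z) − |z|) holds. -/
open Complex

/-!
Write `r = ‖z‖` and `x = re z`. Since `‖1 - z‖ ≥ 1 - x`, it suffices to show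
`1 - r ≤ (1 - x) exp (x - r)` for `-r ≤ x ≤ r < 1`. By `exp t ≥ 1 + t`: for `x ≥ 0` the right side
is at least `(1 - x)(1 + x - r) = 1 - r + x (r - x)`; for `x ≤ 0` it is at least
`(1 - x)(1 + x + r) exp (-2r) ≥ (1 + r) exp (-2r)`, which is `≥ 1 - r` because
`2r ≤ log ((1 + r) / (1 - r))`, the first term of the `artanh` series.
-/

lemma Real.two_mul_le_log_one_add_sub_log_one_sub {r : ℝ} (h0 : 0 ≤ r) (h1 : r < 1) :
    2 * r ≤ Real.log (1 + r) - Real.log (1 - r) := by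
  have hsum := Real.hasSum_log_sub_log_of_abs_lt_one (abs_lt.2 ⟨by linarith, h1⟩)
  simpa using le_hasSum hsum 0 fun k _ ↦ by positivity

lemma Real.one_sub_mul_exp_two_mul_le {r : ℝ} (h0 : 0 ≤ r) (h1 : r < 1) :
    (1 - r) * Real.exp (2 * r) ≤ 1 + r := by
  have h1r : 0 < 1 - r := by linarith
  calc (1 - r) * Real.exp (2 * r)
      ≤ (1 - r) * Real.exp (Real.log (1 + r) - Real.log (1 - r)) := by
        gcongr; exact Real.two_mul_le_log_one_add_sub_log_one_sub h0 h1
    _ = 1 + r := by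
        rw [Real.exp_sub, Real.exp_log (by linarith), Real.exp_log h1r]
        field_simp

lemma Real.one_sub_le_one_sub_mul_exp_sub {r x : ℝ} (hr : r < 1) (hxr : x ≤ r) (hrx : -r ≤ x) :
    1 - r ≤ (1 - x) * Real.exp (x - r) := by
  have h1x : 0 ≤ 1 - x := by linarith
  rcases le_total 0 x with hx | hx
  · calc 1 - r ≤ (1 - x) * (x - r + 1) := by nlinarith
      _ ≤ (1 - x) * Real.exp (x - r) := by gcongr; exact Real.add_one_le_exp _
  · calc 1 - r ≤ (1 + r) * Real.exp (-(2 * r)) := by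
          rw [Real.exp_neg, ← div_eq_mul_inv, le_div_iff₀ (Real.exp_pos _)]
          exact Real.one_sub_mul_exp_two_mul_le (by linarith) hr
      _ ≤ (1 - x) * (x + r + 1) * Real.exp (-(2 * r)) := by gcongr; nlinarith
      _ ≤ (1 - x) * Real.exp (x + r) * Real.exp (-(2 * r)) := by
          gcongr; exact Real.add_one_le_exp _
      _ = (1 - x) * Real.exp (x - r) := by
          rw [mul_assoc, ← Real.exp_add]; ring_nf

/-- For every complex number `z` with `|z| < 1`,
`|(1 - |z|)/(1 - z)| ≤ exp(Re(z) - |z|)`. -/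
theorem abs_one_sub_abs_div_one_sub_le {z : ℂ} (hz : ‖z‖ < 1) :
    ‖(1 - (‖z‖ : ℂ)) / (1 - z)‖ ≤ Real.exp (z.re - ‖z‖) := by
  obtain ⟨hre_ge, hre_le⟩ := abs_le.1 (Complex.abs_re_le_norm z)
  have hnum : ‖1 - (‖z‖ : ℂ)‖ = 1 - ‖z‖ := by
    rw [← ofReal_one, ← ofReal_sub, norm_real, Real.norm_of_nonneg (by linarith)]
  have hden : 1 - z.re ≤ ‖1 - z‖ := by simpa using Complex.re_le_norm (1 - z)
  rw [norm_div, hnum, div_le_iff₀ (by linarith)]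
  calc 1 - ‖z‖ ≤ (1 - z.re) * Real.exp (z.re - ‖z‖) :=
        Real.one_sub_le_one_sub_mul_exp_sub hz hre_le hre_ge
    _ ≤ Real.exp (z.re - ‖z‖) * ‖1 - z‖ := by
        rw [mul_comm]; gcongr
end
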